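/- Let H be a bialgebra over a field k and A a commutative right H-comodule algebra. If M is a projective object in the category M_A^H of relative Hopf modules, then M is projective as an A-module. -/

import Mathlib

open TensorProduct

universe u

/-- A commutative right `H`-comodule algebra: a commutative `k`-algebra `A` together with
a coassociative counital coaction `ρ : A → A ⊗ H` which is an algebra map. -/
structure ComodAlg (k H A : Type u) [CommRing k] [Ring H] [Bialgebra k H]
    [CommRing A] [Algebra k A] : Type u where
  ρ : A →ₐ[k] A ⊗[k] H
  counit_comp : ∀ a : A,
    (TensorProduct.rid k A) ((LinearMap.lTensor A (Coalgebra.counit (R := k) (A := H))) (ρ a)) = a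
  coassoc : ∀ a : A,
    (LinearMap.lTensor A (Coalgebra.comul (R := k) (A := H))) (ρ a)
      = (TensorProduct.assoc k A H H) ((LinearMap.rTensor H ρ.toLinearMap) (ρ a))

namespace ComodAlg

variable {k H A : Type u} [CommRing k] [Ring H] [Bialgebra k H]
  [CommRing A] [Algebra k A] (c : ComodAlg k H A)

/-- The subset of coinvariant elements `B = A^{co H}`. -/
def coinvSet : Set A := {a : A | c.ρ a = a ⊗ₜ[k] 1}

/-- The coinvariants `B = A^{co H}` as a subalgebra of `A`. -/
def coinvAlg : Subalgebra k A where
  carrier := c.coinvSet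
  mul_mem' {a} {b} ha hb := by
    simp only [coinvSet, Set.mem_setOf_eq] at *
    rw [map_mul, ha, hb, Algebra.TensorProduct.tmul_mul_tmul, mul_one]
  add_mem' {a} {b} ha hb := by
    simp only [coinvSet, Set.mem_setOf_eq] at *
    rw [map_add, ha, hb, ← add_tmul]
  algebraMap_mem' r := by
    simp only [coinvSet, Set.mem_setOf_eq, AlgHom.commutes,
      Algebra.TensorProduct.algebraMap_apply]

end ComodAlg

namespace ComodAlg

variable {k H A : Type u} [CommRing k] [Ring H] [Bialgebra k H]
  [CommRing A] [Algebra k A]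

variable (k A H) in
/-- The action of `A ⊗ H` on `M ⊗ H` given by `(a ⊗ h) • (m ⊗ h') = (a • m) ⊗ (h h')`,
used to express the compatibility condition of relative Hopf modules. -/
noncomputable def actAH (M : Type u) [AddCommGroup M] [Module k M] [Module A M]
    [IsScalarTower k A M] : (A ⊗[k] H) →ₗ[k] (M ⊗[k] H) →ₗ[k] (M ⊗[k] H) :=
  (TensorProduct.homTensorHomMap (RingHom.id k) M H M H) ∘ₗ
    (TensorProduct.map ((Algebra.lsmul k k M : A →ₐ[k] Module.End k M).toLinearMap)
      (LinearMap.mul k H))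

/-- A relative Hopf module structure on an `A`-module `M`: a right `H`-coaction
compatible with the `A`-action, `ρ_M(m a) = m₍₀₎ a₍₀₎ ⊗ m₍₁₎ a₍₁₎`. -/
structure HopfMod (c : ComodAlg k H A) (M : Type u) [AddCommGroup M] [Module k M]
    [Module A M] [IsScalarTower k A M] where
  coact : M →ₗ[k] M ⊗[k] H
  smul_compat : ∀ (a : A) (m : M), coact (a • m) = actAH k H A M (c.ρ a) (coact m)
  counit_comp : ∀ m : M,
    (TensorProduct.rid k M) ((LinearMap.lTensor M (Coalgebra.counit (R := k) (A := H)))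
      (coact m)) = m
  coassoc : ∀ m : M,
    (LinearMap.lTensor M (Coalgebra.comul (R := k) (A := H))) (coact m)
      = (TensorProduct.assoc k M H H) ((LinearMap.rTensor H coact) (coact m))

variable {c : ComodAlg k H A}

/-- A morphism of relative Hopf modules is an `A`-linear map which is `H`-colinear. -/
def IsColinear {M N : Type u} [AddCommGroup M] [Module k M] [Module A M]
    [IsScalarTower k A M] [AddCommGroup N] [Module k N] [Module A N] [IsScalarTower k A N]
    (hm : HopfMod c M) (hn : HopfMod c N) (f : M →ₗ[A] N) : Prop :=
  ∀ m : M, hn.coact (f m) = (LinearMap.rTensor H (f.restrictScalars k)) (hm.coact m)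

/-- The regular relative Hopf module `A` itself. -/
noncomputable def regular (c : ComodAlg k H A) : HopfMod c A where
  coact := c.ρ.toLinearMap
  smul_compat := fun a m => by
    simp only [AlgHom.toLinearMap_apply, smul_eq_mul, map_mul, actAH]
    generalize c.ρ a = x; generalize c.ρ m = y
    induction x with
    | zero => simp
    | add u v hu hv => simp_all [add_mul]
    | tmul a' h' =>
        induction y with
        | zero => simp
        | add u v hu hv => simp_all [mul_add]
        | tmul b' g' =>
            simp [Algebra.TensorProduct.tmul_mul_tmul, TensorProduct.homTensorHomMap_apply,
              smul_eq_mul]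
  counit_comp := c.counit_comp
  coassoc := c.coassoc

end ComodAlg

namespace ComodAlg

variable {k H A : Type u} [CommRing k] [Ring H] [Bialgebra k H]
  [CommRing A] [Algebra k A]

/-- `M` is a projective object in the category `M_A^H` of relative Hopf modules: every
morphism from `M` to the codomain of an epimorphism of relative Hopf modules lifts. -/
def IsProjectiveObject (c : ComodAlg k H A) (M : Type u) [AddCommGroup M] [Module k M]
    [Module A M] [IsScalarTower k A M] (hm : HopfMod c M) : Prop :=
  ∀ (P Q : Type u) [AddCommGroup P] [Module k P] [Module A P] [IsScalarTower k A P]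
    [AddCommGroup Q] [Module k Q] [Module A Q] [IsScalarTower k A Q]
    (hp : HopfMod c P) (hq : HopfMod c Q) (p : P →ₗ[A] Q),
    Function.Surjective p → IsColinear hp hq p →
    ∀ g : M →ₗ[A] Q, IsColinear hm hq g →
      ∃ h : M →ₗ[A] P, IsColinear hm hp h ∧ p ∘ₗ h = g

/-- `H` is cosemisimple: there is a (left) integral `φ` on `H` (i.e. an element of `H^*`
with `Σ h₍₁₎ φ(h₍₂₎) = φ(h) 1`) such that `φ(1) = 1`. -/
def IsCosemisimple (k H : Type u) [CommRing k] [Ring H] [Bialgebra k H] : Prop :=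
  ∃ φ : H →ₗ[k] k, φ 1 = 1 ∧
    ∀ h : H, (TensorProduct.rid k H)
        ((LinearMap.lTensor H φ) (Coalgebra.comul (R := k) (A := H) h)) = φ h • (1 : H)

end ComodAlg

/-!
The multiplication map `A ⊗ₖ M → M` is a surjective morphism of relative Hopf modules once
`A ⊗ₖ M` carries the diagonal coaction `a ⊗ m ↦ a₍₀₎ ⊗ m₍₀₎ ⊗ a₍₁₎ m₍₁₎`, so projectivity of `M`
in `M_A^H` splits it `A`-linearly. Over a field `M` is free, hence `A ⊗ₖ M` is a free `A`-module
and `M` is a direct summand of it.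
-/

section TensorTensorMul

variable (k : Type*) [CommRing k] (H : Type*) [Ring H] [Algebra k H]
  (V W : Type*) [AddCommGroup V] [Module k V] [AddCommGroup W] [Module k W]

noncomputable def tensorTensorMul : (V ⊗[k] H) ⊗[k] (W ⊗[k] H) →ₗ[k] (V ⊗[k] W) ⊗[k] H :=
  LinearMap.lTensor (V ⊗[k] W) (LinearMap.mul' k H) ∘ₗ
    (TensorProduct.tensorTensorTensorComm k V H W H).toLinearMap

variable {k H V W}

@[simp] lemma tensorTensorMul_tmul (v : V) (h : H) (w : W) (g : H) :
    tensorTensorMul k H V W ((v ⊗ₜ h) ⊗ₜ (w ⊗ₜ g)) = (v ⊗ₜ w) ⊗ₜ (h * g) := by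
  simp [tensorTensorMul]

lemma lTensor_algHom_comp_tensorTensorMul {H' : Type*} [Ring H'] [Algebra k H']
    (f : H →ₐ[k] H') :
    LinearMap.lTensor (V ⊗[k] W) f.toLinearMap ∘ₗ tensorTensorMul k H V W =
      tensorTensorMul k H' V W ∘ₗ
        TensorProduct.map (f.toLinearMap.lTensor V) (f.toLinearMap.lTensor W) := by
  ext; simp

lemma tensorTensorMul_comp_map_rTensor {V' W' : Type*} [AddCommGroup V'] [Module k V']
    [AddCommGroup W'] [Module k W'] (f : V →ₗ[k] V') (g : W →ₗ[k] W') :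
    tensorTensorMul k H V' W' ∘ₗ TensorProduct.map (f.rTensor H) (g.rTensor H) =
      (TensorProduct.map f g).rTensor H ∘ₗ tensorTensorMul k H V W := by
  ext; simp

lemma tensorTensorMul_comp_map_assoc :
    tensorTensorMul k (H ⊗[k] H) V W ∘ₗ
        TensorProduct.map (TensorProduct.assoc k V H H).toLinearMap
          (TensorProduct.assoc k W H H).toLinearMap =
      (TensorProduct.assoc k (V ⊗[k] W) H H).toLinearMap ∘ₗ
        (tensorTensorMul k H V W).rTensor H ∘ₗ tensorTensorMul k H (V ⊗[k] H) (W ⊗[k] H) := by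
  ext; simp [Algebra.TensorProduct.tmul_mul_tmul]

end TensorTensorMul

section TensorCoaction
variable {k : Type*} [CommRing k] {H : Type*} [Ring H] [Bialgebra k H]
  {V W : Type*} [AddCommGroup V] [Module k V] [AddCommGroup W] [Module k W]

lemma rid_lTensor_counit_comp_tensorTensorMul :
    (TensorProduct.rid k (V ⊗[k] W)).toLinearMap ∘ₗ
        LinearMap.lTensor (V ⊗[k] W) (Coalgebra.counit (R := k) (A := H)) ∘ₗ
          tensorTensorMul k H V W =
      TensorProduct.map
        ((TensorProduct.rid k V).toLinearMap ∘ₗ LinearMap.lTensor V Coalgebra.counit)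
        ((TensorProduct.rid k W).toLinearMap ∘ₗ LinearMap.lTensor W Coalgebra.counit) := by
  ext; simp [Bialgebra.counit_mul, TensorProduct.smul_tmul', smul_smul, mul_comm]

noncomputable def tensorCoaction (δV : V →ₗ[k] V ⊗[k] H) (δW : W →ₗ[k] W ⊗[k] H) :
    V ⊗[k] W →ₗ[k] (V ⊗[k] W) ⊗[k] H :=
  tensorTensorMul k H V W ∘ₗ TensorProduct.map δV δW

lemma tensorCoaction_counit {δV : V →ₗ[k] V ⊗[k] H} {δW : W →ₗ[k] W ⊗[k] H}
    (hV : (TensorProduct.rid k V).toLinearMap ∘ₗ LinearMap.lTensor V Coalgebra.counit ∘ₗ δV =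
      LinearMap.id)
    (hW : (TensorProduct.rid k W).toLinearMap ∘ₗ LinearMap.lTensor W Coalgebra.counit ∘ₗ δW =
      LinearMap.id) :
    (TensorProduct.rid k (V ⊗[k] W)).toLinearMap ∘ₗ
        LinearMap.lTensor (V ⊗[k] W) Coalgebra.counit ∘ₗ tensorCoaction δV δW =
      LinearMap.id := by
  rw [tensorCoaction, ← LinearMap.comp_assoc (TensorProduct.map δV δW),
    ← LinearMap.comp_assoc (TensorProduct.map δV δW), rid_lTensor_counit_comp_tensorTensorMul,
    ← TensorProduct.map_comp, LinearMap.comp_assoc, LinearMap.comp_assoc, hV, hW,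
    TensorProduct.map_id]

lemma tensorCoaction_coassoc {δV : V →ₗ[k] V ⊗[k] H} {δW : W →ₗ[k] W ⊗[k] H}
    (hV : LinearMap.lTensor V Coalgebra.comul ∘ₗ δV =
      (TensorProduct.assoc k V H H).toLinearMap ∘ₗ δV.rTensor H ∘ₗ δV)
    (hW : LinearMap.lTensor W Coalgebra.comul ∘ₗ δW =
      (TensorProduct.assoc k W H H).toLinearMap ∘ₗ δW.rTensor H ∘ₗ δW) :
    LinearMap.lTensor (V ⊗[k] W) Coalgebra.comul ∘ₗ tensorCoaction δV δW =
      (TensorProduct.assoc k (V ⊗[k] W) H H).toLinearMap ∘ₗ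
        (tensorCoaction δV δW).rTensor H ∘ₗ tensorCoaction δV δW := by
  calc LinearMap.lTensor (V ⊗[k] W) Coalgebra.comul ∘ₗ tensorCoaction δV δW
      = tensorTensorMul k (H ⊗[k] H) V W ∘ₗ
          TensorProduct.map (LinearMap.lTensor V Coalgebra.comul ∘ₗ δV)
            (LinearMap.lTensor W Coalgebra.comul ∘ₗ δW) := by
        rw [tensorCoaction, ← LinearMap.comp_assoc, ← Bialgebra.toLinearMap_comulAlgHom,
          lTensor_algHom_comp_tensorTensorMul, LinearMap.comp_assoc, ← TensorProduct.map_comp]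
    _ = (TensorProduct.assoc k (V ⊗[k] W) H H).toLinearMap ∘ₗ
          (tensorTensorMul k H V W).rTensor H ∘ₗ tensorTensorMul k H (V ⊗[k] H) (W ⊗[k] H) ∘ₗ
            TensorProduct.map (δV.rTensor H) (δW.rTensor H) ∘ₗ TensorProduct.map δV δW := by
        rw [hV, hW, TensorProduct.map_comp, TensorProduct.map_comp, ← LinearMap.comp_assoc,
          tensorTensorMul_comp_map_assoc]
        simp only [LinearMap.comp_assoc]
    _ = _ := by
        rw [← LinearMap.comp_assoc _ (TensorProduct.map (δV.rTensor H) (δW.rTensor H)),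
          tensorTensorMul_comp_map_rTensor, tensorCoaction, LinearMap.rTensor_comp]
        simp only [LinearMap.comp_assoc]

end TensorCoaction

namespace ComodAlg

variable {k H A : Type u} [CommRing k] [Ring H] [Bialgebra k H] [CommRing A] [Algebra k A]
  {M : Type u} [AddCommGroup M] [Module k M]

@[simp] lemma actAH_tmul [Module A M] [IsScalarTower k A M] (a : A) (h : H) (m : M) (g : H) :
    actAH k H A M (a ⊗ₜ h) (m ⊗ₜ g) = (a • m) ⊗ₜ (h * g) := by
  simp [actAH, TensorProduct.homTensorHomMap_apply]

lemma tensorTensorMul_mul_tmul (x y : A ⊗[k] H) (z : M ⊗[k] H) :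
    tensorTensorMul k H A M ((x * y) ⊗ₜ z) =
      actAH k H A (A ⊗[k] M) x (tensorTensorMul k H A M (y ⊗ₜ z)) := by
  induction x with
  | zero => simp
  | add x x' hx hx' => simp only [add_mul, add_tmul, map_add, LinearMap.add_apply, hx, hx']
  | tmul b h =>
    induction y using TensorProduct.induction_on with
    | zero => simp
    | add y y' hy hy' => simp only [mul_add, add_tmul, map_add, hy, hy']
    | tmul a g =>
      induction z using TensorProduct.induction_on with
      | zero => simp
      | add z z' hz hz' => simp only [tmul_add, map_add, hz, hz']
      | tmul m g' => simp [Algebra.TensorProduct.tmul_mul_tmul, smul_tmul', mul_assoc]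

variable [Module A M] [IsScalarTower k A M] {c : ComodAlg k H A}

lemma rTensor_liftBaseChange_comp_tensorTensorMul :
    ((LinearMap.id.liftBaseChange A : A ⊗[k] M →ₗ[A] M).restrictScalars k).rTensor H ∘ₗ
        tensorTensorMul k H A M =
      TensorProduct.lift (actAH k H A M) := by
  ext; simp

noncomputable def HopfMod.baseChange (hm : HopfMod c M) :
    HopfMod c (A ⊗[k] M) where
  coact := tensorCoaction c.ρ.toLinearMap hm.coact
  smul_compat b x := by
    induction x with
    | zero => simp
    | add x x' hx hx' => simp only [smul_add, map_add, hx, hx']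
    | tmul a m =>
      rw [smul_tmul', smul_eq_mul]
      change tensorTensorMul k H A M (c.ρ (b * a) ⊗ₜ hm.coact m) = _
      rw [map_mul, tensorTensorMul_mul_tmul]
      rfl
  counit_comp := LinearMap.congr_fun <|
    tensorCoaction_counit (LinearMap.ext c.counit_comp) (LinearMap.ext hm.counit_comp)
  coassoc := LinearMap.congr_fun <|
    tensorCoaction_coassoc (LinearMap.ext c.coassoc) (LinearMap.ext hm.coassoc)

lemma isColinear_id (hm : HopfMod c M) : IsColinear hm hm LinearMap.id := fun m => by
  simp

lemma HopfMod.isColinear_liftBaseChange (hm : HopfMod c M) :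
    IsColinear hm.baseChange hm (LinearMap.id.liftBaseChange A) := by
  intro x
  induction x with
  | zero => simp
  | add x x' hx hx' => simp only [map_add, hx, hx']
  | tmul a m =>
    rw [LinearMap.liftBaseChange_tmul, LinearMap.id_apply, hm.smul_compat]
    exact (LinearMap.congr_fun rTensor_liftBaseChange_comp_tensorTensorMul
      (c.ρ a ⊗ₜ hm.coact m)).symm

end ComodAlg

open ComodAlg in
theorem forget_preserves_projectives
    {k H A : Type u} [Field k] [Ring H] [Bialgebra k H]
    [CommRing A] [Algebra k A] (c : ComodAlg k H A)
    (M : Type u) [AddCommGroup M] [Module k M] [Module A M] [IsScalarTower k A M]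
    (hm : HopfMod c M) (hproj : IsProjectiveObject c M hm) :
    Module.Projective A M := by
  let p : A ⊗[k] M →ₗ[A] M := LinearMap.id.liftBaseChange A
  have hp_surj : Function.Surjective p := fun m => ⟨1 ⊗ₜ m, by simp [p]⟩
  obtain ⟨s, -, hps⟩ := hproj _ _ hm.baseChange hm p hp_surj
    hm.isColinear_liftBaseChange LinearMap.id (isColinear_id hm)
  exact Module.Projective.of_split s p hps
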